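/- Let r ≥ 4, s ≥ 3, 0 ≤ t ≤ s−1, G = T(r,s,t), and let L be a list assignment with every list of size exactly 5 satisfying criteria (i)–(iv). If a vertex v = (i,j) has some neighbour u with L(u) = L(v), then at least one vertical neighbour of v has list equal to L(v), i.e., L(i,j+1) = L(v) or L(i,j−1) = L(v). -/

import Mathlib

/-- The neighbour relation underlying Altshuler's toroidal triangulation `T(r,s,t)`:
`Tnbr r s t u v` says that `v` is one of the six listed neighbours of `u`. -/
def Tnbr (r s t : ℕ) (u v : ZMod r × ZMod s) : Prop :=
  if r = 1 then
    v.1 = u.1 ∧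
      (v.2 = u.2 + 1 ∨ v.2 = u.2 - 1 ∨ v.2 = u.2 + (t : ZMod s) ∨ v.2 = u.2 - (t : ZMod s) ∨
        v.2 = u.2 + ((t : ZMod s) + 1) ∨ v.2 = u.2 - ((t : ZMod s) + 1))
  else if u.1 = 1 then
    (v.1 = u.1 ∧ (v.2 = u.2 + 1 ∨ v.2 = u.2 - 1)) ∨
    (v.1 = u.1 + 1 ∧ (v.2 = u.2 ∨ v.2 = u.2 - 1)) ∨
    (v.1 = u.1 - 1 ∧ (v.2 = u.2 + (t : ZMod s) + 1 ∨ v.2 = u.2 + (t : ZMod s)))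
  else if u.1 = 0 then
    (v.1 = u.1 ∧ (v.2 = u.2 + 1 ∨ v.2 = u.2 - 1)) ∨
    (v.1 = u.1 - 1 ∧ (v.2 = u.2 + 1 ∨ v.2 = u.2)) ∨
    (v.1 = u.1 + 1 ∧ (v.2 = u.2 - (t : ZMod s) ∨ v.2 = u.2 - (t : ZMod s) - 1))
  else
    (v.1 = u.1 ∧ (v.2 = u.2 + 1 ∨ v.2 = u.2 - 1)) ∨
    (v.1 = u.1 + 1 ∧ (v.2 = u.2 ∨ v.2 = u.2 - 1)) ∨
    (v.1 = u.1 - 1 ∧ (v.2 = u.2 ∨ v.2 = u.2 + 1))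

/-- Altshuler's `6`-regular toroidal triangulation `T(r,s,t)`, with vertex `(i,j)`
represented by the pair `(i mod r, j mod s)`. -/
def T (r s t : ℕ) : SimpleGraph (ZMod r × ZMod s) where
  Adj u v := u ≠ v ∧ (Tnbr r s t u v ∨ Tnbr r s t v u)
  symm := ⟨fun u v h => ⟨h.1.symm, h.2.symm⟩⟩
  loopless := ⟨fun u h => h.1 rfl⟩

/-- `G` is `L`-choosable: there is a proper colouring choosing each colour from its list. -/
def IsLChoosable {V : Type*} (G : SimpleGraph V) (L : V → Finset ℕ) : Prop :=
  ∃ c : V → ℕ, (∀ v, c v ∈ L v) ∧ ∀ u v, G.Adj u v → c u ≠ c v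

/-- `G` is `k`-choosable: `G` is `L`-choosable for every list assignment of `k`-lists. -/
def Choosable {V : Type*} (G : SimpleGraph V) (k : ℕ) : Prop :=
  ∀ L : V → Finset ℕ, (∀ v, k ≤ (L v).card) → IsLChoosable G L


/-- Criterion (i): not all the lists are identical, and every vertex's list is contained
in the union of the lists of its two left neighbours and in the union of the lists of
its two right neighbours. -/
def Crit1 (r s : ℕ) (L : ZMod r × ZMod s → Finset ℕ) : Prop :=
  (¬ ∀ u v : ZMod r × ZMod s, L u = L v) ∧
  ∀ (i : ZMod r) (j : ZMod s),
    L (i, j) ⊆ L (i - 1, j) ∪ L (i - 1, j + 1) ∧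
    L (i, j) ⊆ L (i + 1, j) ∪ L (i + 1, j - 1)

/-- Criterion (ii): whenever `(i,j)` and `(i,j−1)` have distinct lists, one of the three
configurations (a)–(c) holds with respect to their left neighbours, and one of the three
mirror configurations (a')–(c') holds with respect to their right neighbours. -/
def Crit2 (r s : ℕ) (L : ZMod r × ZMod s → Finset ℕ) : Prop :=
  ∀ (i : ZMod r) (j : ZMod s), L (i, j) ≠ L (i, j - 1) →
    ((L (i, j) = L (i - 1, j + 1) ∧ L (i, j - 1) = L (i - 1, j - 1)) ∨
     (L (i, j) = L (i - 1, j + 1) ∧ L (i, j) = L (i - 1, j) ∧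
       L (i, j - 1) ≠ L (i - 1, j - 1)) ∨
     (L (i, j) ≠ L (i - 1, j + 1) ∧ L (i, j - 1) = L (i - 1, j) ∧
       L (i, j - 1) = L (i - 1, j - 1))) ∧
    ((L (i, j) = L (i + 1, j) ∧ L (i, j - 1) = L (i + 1, j - 2)) ∨
     (L (i, j - 1) = L (i + 1, j - 2) ∧ L (i, j - 1) = L (i + 1, j - 1) ∧
       L (i, j) ≠ L (i + 1, j)) ∨
     (L (i, j - 1) ≠ L (i + 1, j - 2) ∧ L (i, j) = L (i + 1, j - 1) ∧
       L (i, j) = L (i + 1, j)))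

/-- Criterion (iii): adjacent vertices in distinct columns with identical lists have a
common neighbour with the same list. -/
def Crit3 (r s t : ℕ) (L : ZMod r × ZMod s → Finset ℕ) : Prop :=
  ∀ u v : ZMod r × ZMod s, (T r s t).Adj u v → u.1 ≠ v.1 → L u = L v →
    ∃ w, (T r s t).Adj u w ∧ (T r s t).Adj v w ∧ L w = L u

/-- Criterion (iv): whenever `u`, `v`, `w` are mutually adjacent vertices with identical
lists and `v`, `w` lie in the same column, at least one vertical neighbour of `u` has a
list identical to `L(u)`. -/
def Crit4 (r s t : ℕ) (L : ZMod r × ZMod s → Finset ℕ) : Prop :=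
  ∀ u v w : ZMod r × ZMod s, (T r s t).Adj u v → (T r s t).Adj v w → (T r s t).Adj u w →
    L u = L v → L v = L w → v.1 = w.1 →
    (L (u.1, u.2 + 1) = L u ∨ L (u.1, u.2 - 1) = L u)

/-- The vertex `v` is isolated for the list assignment `L`: no neighbour of `v` has a
list identical to `L(v)`. -/
def Isolated (r s t : ℕ) (L : ZMod r × ZMod s → Finset ℕ) (v : ZMod r × ZMod s) : Prop :=
  ∀ w, (T r s t).Adj v w → L w ≠ L v

/-!
A neighbour `u` of `v` with `L u = L v` is either in the column of `v`, hence vertical, or by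
criterion (iii) spans with `v` a triangle `v, u, w` of identical lists. Since `r ≥ 4`, two vertices
of a triangle of `T(r,s,t)` share a column: if that is `w` and `v`, then `w` is vertical, and
otherwise `u` and `w` share a column and criterion (iv) applies at `v`.
-/

section Columns

variable {r s t : ℕ}

lemma Tnbr_fst (hr : r ≠ 1) {u v : ZMod r × ZMod s} (h : Tnbr r s t u v) :
    v.1 = u.1 ∨ v.1 = u.1 + 1 ∨ v.1 = u.1 - 1 := by
  unfold Tnbr at h
  rw [if_neg hr] at h
  split_ifs at h <;> tauto

lemma T_adj_fst (hr : r ≠ 1) {u v : ZMod r × ZMod s} (h : (T r s t).Adj u v) :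
    v.1 = u.1 ∨ v.1 = u.1 + 1 ∨ v.1 = u.1 - 1 := by
  rcases h.2 with h | h
  · exact Tnbr_fst hr h
  · rcases Tnbr_fst hr h with h | h | h
    · exact .inl h.symm
    · exact .inr (.inr (eq_sub_of_add_eq h.symm))
    · exact .inr (.inl (eq_add_of_sub_eq h.symm))

lemma Tnbr_snd_of_fst_eq (hr : r ≠ 1) {u v : ZMod r × ZMod s} (h : Tnbr r s t u v)
    (hc : v.1 = u.1) : v.2 = u.2 + 1 ∨ v.2 = u.2 - 1 := by
  have : Nontrivial (ZMod r) := ZMod.nontrivial_iff.mpr hr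
  have h1 : (1 : ZMod r) ≠ 0 := one_ne_zero
  unfold Tnbr at h
  rw [if_neg hr] at h
  split_ifs at h <;> rcases h with ⟨-, h⟩ | ⟨h', -⟩ | ⟨h', -⟩ <;> first
    | exact h
    | exact absurd (by linear_combination h' - hc) h1
    | exact absurd (by linear_combination hc - h') h1

lemma T_adj_snd_of_fst_eq (hr : r ≠ 1) {u v : ZMod r × ZMod s} (h : (T r s t).Adj u v)
    (hc : v.1 = u.1) : v.2 = u.2 + 1 ∨ v.2 = u.2 - 1 := by
  rcases h.2 with h | h
  · exact Tnbr_snd_of_fst_eq hr h hc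
  · rcases Tnbr_snd_of_fst_eq hr h hc.symm with h | h
    · exact .inr (eq_sub_of_add_eq h.symm)
    · exact .inl (eq_add_of_sub_eq h.symm)

lemma T_adj_eq_vertical (hr : r ≠ 1) {i : ZMod r} {j : ZMod s} {w : ZMod r × ZMod s}
    (h : (T r s t).Adj (i, j) w) (hc : w.1 = i) : w = (i, j + 1) ∨ w = (i, j - 1) := by
  rcases T_adj_snd_of_fst_eq hr h hc with h | h
  · exact .inl (Prod.ext hc h)
  · exact .inr (Prod.ext hc h)

-- Columns of adjacent vertices differ by `0` or `±1`, and three pairwise distinct ones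
-- would force `3 = 0` or `1 = 0` in `ZMod r`.
lemma T_triangle_fst_eq (h3 : (3 : ZMod r) ≠ 0) {u v w : ZMod r × ZMod s}
    (huv : (T r s t).Adj u v) (hvw : (T r s t).Adj v w) (huw : (T r s t).Adj u w) :
    u.1 = v.1 ∨ v.1 = w.1 ∨ u.1 = w.1 := by
  have hr : r ≠ 1 := by
    rintro rfl
    exact h3 (Subsingleton.elim _ _)
  have h1 : (1 : ZMod r) ≠ 0 := fun h => h3 (by linear_combination 3 * h)
  rcases T_adj_fst hr huv with h | h | h <;> rcases T_adj_fst hr hvw with h' | h' | h' <;>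
    rcases T_adj_fst hr huw with h'' | h'' | h'' <;>
    first
      | exact .inl h.symm
      | exact .inr (.inl h'.symm)
      | exact .inr (.inr h''.symm)
      | exact absurd (by linear_combination h + h' - h'') h1
      | exact absurd (by linear_combination h'' - h - h') h1
      | exact absurd (by linear_combination h + h' - h'') h3
      | exact absurd (by linear_combination h'' - h - h') h3

end Columns

theorem T_nonisolated_vertical_neighbor_general (r s t : ℕ) (hr : 4 ≤ r)
    (L : ZMod r × ZMod s → Finset ℕ)
    (hcrit3 : Crit3 r s t L) (hcrit4 : Crit4 r s t L)
    (i : ZMod r) (j : ZMod s)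
    (hnoniso : ∃ u, (T r s t).Adj (i, j) u ∧ L u = L (i, j)) :
    L (i, j + 1) = L (i, j) ∨ L (i, j - 1) = L (i, j) := by
  have hr1 : r ≠ 1 := by omega
  have h3 : (3 : ZMod r) ≠ 0 := by
    rw [← Nat.cast_ofNat, Ne, ZMod.natCast_eq_zero_iff]
    exact fun h => absurd (Nat.le_of_dvd three_pos h) (by omega)
  have of_same_column : ∀ w, (T r s t).Adj (i, j) w → w.1 = i → L w = L (i, j) →
      L (i, j + 1) = L (i, j) ∨ L (i, j - 1) = L (i, j) := by
    intro w hw hc hL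
    rcases T_adj_eq_vertical hr1 hw hc with rfl | rfl
    · exact .inl hL
    · exact .inr hL
  obtain ⟨u, hu, hLu⟩ := hnoniso
  by_cases hcu : u.1 = i
  · exact of_same_column u hu hcu hLu
  obtain ⟨w, hw, huw, hLw⟩ := hcrit3 (i, j) u hu (Ne.symm hcu) hLu.symm
  by_cases hcw : w.1 = i
  · exact of_same_column w hw hcw hLw
  have huw_col : u.1 = w.1 := by
    simpa [Ne.symm hcu, Ne.symm hcw] using T_triangle_fst_eq h3 hu huw hw
  exact hcrit4 (i, j) u w hu huw hw hLu.symm (hLu.trans hLw.symm) huw_col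

/-- Lemma 3.3(2). Let `G = T(r,s,t)` with `r ≥ 4`, `s ≥ 3`, and let
`L` assign `5`-lists satisfying criteria (i)–(iv). If the vertex `v = (i,j)` has some
neighbour with a list identical to `L(v)`, then at least one vertical neighbour of `v`
has a list identical to `L(v)`. -/
theorem T_nonisolated_vertical_neighbor (r s t : ℕ) (hr : 4 ≤ r) (hs : 3 ≤ s)
    (ht : t ≤ s - 1) (L : ZMod r × ZMod s → Finset ℕ)
    (hcard : ∀ v, (L v).card = 5)
    (hcrit1 : Crit1 r s L) (hcrit2 : Crit2 r s L)
    (hcrit3 : Crit3 r s t L) (hcrit4 : Crit4 r s t L)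
    (i : ZMod r) (j : ZMod s)
    (hnoniso : ∃ u, (T r s t).Adj (i, j) u ∧ L u = L (i, j)) :
    L (i, j + 1) = L (i, j) ∨ L (i, j - 1) = L (i, j) :=
  T_nonisolated_vertical_neighbor_general r s t hr L hcrit3 hcrit4 i j hnoniso
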